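/- The harmonic energy identity: for any sufficiently smooth and decaying u and t ∈ (−π/2, π/2), ∫ (1/2)|∇Lu(t,x)|² + (1/2)|x|²|Lu(t,x)|² + (μ/(p+1))(cos t)^{(d/2)(p−1)−2}|Lu(t,x)|^{p+1} dx equals the sum of the classical energy ∫ (1/2)|∇u(tan t,x)|² + (μ/(p+1))|u(tan t,x)|^{p+1} dx and the pseudoconformal energy ∫ (1/2)|(x + i tan t ∇)u(tan t,x)|² + (μ tan²t/(p+1))|u(tan t,x)|^{p+1} dx. -/

import Mathlib

open MeasureTheory Real

noncomputable section

/-- The lens transform. -/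
def lens (d : ℕ) (u : ℝ → EuclideanSpace ℝ (Fin d) → ℂ) :
    ℝ → EuclideanSpace ℝ (Fin d) → ℂ :=
  fun t x =>
    (((Real.cos t) ^ (-(d : ℝ) / 2) : ℝ) : ℂ) * u (Real.tan t) ((Real.cos t)⁻¹ • x) *
      Complex.exp (-Complex.I * (‖x‖ : ℂ) ^ 2 * (Real.tan t : ℂ) / 2)

/-- Partial derivative in the `i`-th coordinate direction. -/
def pderiv (d : ℕ) (f : EuclideanSpace ℝ (Fin d) → ℂ) (i : Fin d)
    (x : EuclideanSpace ℝ (Fin d)) : ℂ :=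
  fderiv ℝ f x (EuclideanSpace.single i 1)

/-! ### Auxiliary lemmas -/

lemma schwartz_integrable_rpow (d : ℕ) (f : SchwartzMap (EuclideanSpace ℝ (Fin d)) ℂ)
    {r : ℝ} (hr : 0 < r) : Integrable (fun x => ‖f x‖ ^ r) := by
  set k : ℕ := ⌊(d : ℝ) / r⌋₊ + 1 with hk
  have hdk : (d : ℝ) < r * k := by
    have := Nat.lt_floor_add_one ((d : ℝ) / r)
    rw [div_lt_iff₀ hr] at this
    calc (d : ℝ) < (⌊(d : ℝ) / r⌋₊ + 1) * r := this
    _ = r * k := by push_cast [hk]; ring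
  set C : ℝ := 2 ^ k * (Finset.Iic (k, 0)).sup (fun m => SchwartzMap.seminorm ℝ m.1 m.2) f with hCdef
  have hC : ∀ x, (1 + ‖x‖) ^ k * ‖f x‖ ≤ C := by
    intro x
    simpa [norm_iteratedFDeriv_zero] using
      SchwartzMap.one_add_le_sup_seminorm_apply (𝕜 := ℝ) (m := (k, 0)) le_rfl le_rfl f x
  have hC0 : 0 ≤ C := le_trans (by positivity) (hC 0)
  have hbound : ∀ x : EuclideanSpace ℝ (Fin d),
      ‖f x‖ ^ r ≤ C ^ r * (1 + ‖x‖) ^ (-(r * (k : ℝ))) := by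
    intro x
    have h1 : (0:ℝ) < 1 + ‖x‖ := by positivity
    have h2 : ‖f x‖ ≤ C * (1 + ‖x‖) ^ (-(k:ℝ)) := by
      rw [Real.rpow_neg h1.le, Real.rpow_natCast, le_mul_inv_iff₀ (by positivity), mul_comm]
      exact hC x
    calc ‖f x‖ ^ r ≤ (C * (1 + ‖x‖) ^ (-(k:ℝ))) ^ r :=
          Real.rpow_le_rpow (norm_nonneg _) h2 hr.le
      _ = C ^ r * (1 + ‖x‖) ^ (-(r * (k : ℝ))) := by
          rw [Real.mul_rpow hC0 (Real.rpow_nonneg h1.le _), ← Real.rpow_mul h1.le]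
          ring_nf
  have hint : Integrable (fun x : EuclideanSpace ℝ (Fin d) =>
      C ^ r * (1 + ‖x‖) ^ (-(r * (k : ℝ)))) := by
    refine (integrable_one_add_norm ?_).const_mul _
    rwa [finrank_euclideanSpace_fin]
  refine hint.mono' ?_ ?_
  · exact (f.continuous.norm.rpow_const (fun x => Or.inr hr.le)).aestronglyMeasurable
  · filter_upwards with x
    rw [Real.norm_eq_abs, abs_of_nonneg (Real.rpow_nonneg (norm_nonneg _) _)]
    exact hbound x

lemma schwartz_integrable_normsq (d : ℕ) (f : SchwartzMap (EuclideanSpace ℝ (Fin d)) ℂ) :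
    Integrable (fun x => ‖f x‖ ^ 2) := by
  refine ((f.integrable_pow_mul volume 0).const_mul
    (SchwartzMap.seminorm ℝ 0 0 f)).mono'
    ((f.continuous.norm.pow 2).aestronglyMeasurable) ?_
  filter_upwards with x
  rw [Real.norm_eq_abs, abs_of_nonneg (by positivity), pow_zero, one_mul, sq]
  exact mul_le_mul_of_nonneg_right (SchwartzMap.norm_le_seminorm ℝ f x) (norm_nonneg _)

/-- Multiplication by the `i`-th coordinate as a map of Schwartz functions. -/
def coordMulS (d : ℕ) (i : Fin d) (f : SchwartzMap (EuclideanSpace ℝ (Fin d)) ℂ) :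
    SchwartzMap (EuclideanSpace ℝ (Fin d)) ℂ :=
  SchwartzMap.bilinLeftCLM (ContinuousLinearMap.mul ℝ ℂ)
    ((Complex.ofRealCLM.comp (EuclideanSpace.proj i)).hasTemperateGrowth) f

lemma coordMulS_apply (d : ℕ) (i : Fin d) (f : SchwartzMap (EuclideanSpace ℝ (Fin d)) ℂ)
    (x : EuclideanSpace ℝ (Fin d)) : coordMulS d i f x = f x * ((x i : ℝ) : ℂ) := rfl

lemma pderiv_lens_eq (d : ℕ) (f : SchwartzMap (EuclideanSpace ℝ (Fin d)) ℂ) (c s : ℝ)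
    (i : Fin d) (x : EuclideanSpace ℝ (Fin d)) :
    pderiv d (fun x => ((c ^ (-(d:ℝ)/2) : ℝ) : ℂ) * f (c⁻¹ • x) *
        Complex.exp (-Complex.I * (‖x‖ : ℂ)^2 * (s:ℂ) / 2)) i x
    = ((c ^ (-(d:ℝ)/2) : ℝ) : ℂ) *
        ((c⁻¹ : ℂ) * pderiv d (⇑f) i (c⁻¹ • x) - Complex.I * s * (x i) * f (c⁻¹ • x)) *
        Complex.exp (-Complex.I * (‖x‖ : ℂ)^2 * (s:ℂ) / 2) := by
  set L : EuclideanSpace ℝ (Fin d) →L[ℝ] EuclideanSpace ℝ (Fin d) :=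
    c⁻¹ • ContinuousLinearMap.id ℝ _ with hL
  have h1 : HasFDerivAt (fun y : EuclideanSpace ℝ (Fin d) => f (c⁻¹ • y))
      ((fderiv ℝ f (c⁻¹ • x)).comp L) x := by
    exact HasFDerivAt.comp x (f.differentiableAt.hasFDerivAt) (L.hasFDerivAt)
  have hn : HasFDerivAt (fun y : EuclideanSpace ℝ (Fin d) => ‖y‖^2)
      (2 • (innerSL ℝ x)) x := (hasStrictFDerivAt_norm_sq x).hasFDerivAt
  have hnc : HasFDerivAt (fun y : EuclideanSpace ℝ (Fin d) => ((‖y‖^2 : ℝ) : ℂ))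
      (Complex.ofRealCLM.comp (2 • (innerSL ℝ x))) x :=
    Complex.ofRealCLM.hasFDerivAt.comp x hn
  have h2 : HasFDerivAt
      (fun y : EuclideanSpace ℝ (Fin d) => Complex.exp (-Complex.I * (‖y‖ : ℂ)^2 * (s:ℂ) / 2))
      (Complex.exp (-Complex.I * (‖x‖ : ℂ)^2 * (s:ℂ) / 2) •
        ((-Complex.I * s / 2) • (Complex.ofRealCLM.comp (2 • (innerSL ℝ x))))) x := by
    have heq : ∀ y : EuclideanSpace ℝ (Fin d),
        -Complex.I * (‖y‖ : ℂ)^2 * (s:ℂ) / 2 = (-Complex.I * s / 2) * ((‖y‖^2 : ℝ) : ℂ) := by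
      intro y; push_cast; ring
    simp only [heq]
    exact (hnc.const_mul (-Complex.I * s / 2)).cexp
  have h3 := ((h1.mul h2).const_mul (((c ^ (-(d:ℝ)/2) : ℝ) : ℂ)))
  have hfun : (fun x => ((c ^ (-(d:ℝ)/2) : ℝ) : ℂ) * f (c⁻¹ • x) *
        Complex.exp (-Complex.I * (‖x‖ : ℂ)^2 * (s:ℂ) / 2))
      = (fun y => ((c ^ (-(d:ℝ)/2) : ℝ) : ℂ) * (f (c⁻¹ • y) *
        Complex.exp (-Complex.I * (‖y‖ : ℂ)^2 * (s:ℂ) / 2))) := by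
    funext y; ring
  unfold pderiv
  rw [hfun, (show HasFDerivAt (fun y => ((c ^ (-(d:ℝ)/2) : ℝ) : ℂ) * (f (c⁻¹ • y) *
    Complex.exp (-Complex.I * (‖y‖ : ℂ)^2 * (s:ℂ) / 2))) _ x from h3).fderiv]
  simp only [ContinuousLinearMap.smul_apply, ContinuousLinearMap.add_apply,
    ContinuousLinearMap.comp_apply, ContinuousLinearMap.coe_smul', Pi.smul_apply,
    ContinuousLinearMap.coe_id', id_eq, innerSL_apply_apply, Complex.ofRealCLM_apply,
    EuclideanSpace.inner_single_right, hL]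
  rw [(fderiv ℝ (⇑f) (c⁻¹ • x)).map_smul]
  simp only [smul_eq_mul, Complex.real_smul, starRingEnd_apply, star_trivial, nsmul_eq_mul,
    Complex.ofReal_mul, Complex.ofReal_inv, Complex.ofReal_ofNat, Complex.ofReal_one]
  push_cast
  ring

lemma per_coord (c s yj : ℝ) (hcs : c^2*(1+s^2)=1) (a b : ℂ) :
    ‖(c⁻¹:ℂ) * a - Complex.I*s*(c*yj)*b‖^2 + c^2*yj^2*‖b‖^2
    = ‖a‖^2 + ‖(yj:ℂ)*b + Complex.I*s*a‖^2 := by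
  have hc : c ≠ 0 := by intro h; rw [h] at hcs; norm_num at hcs
  simp only [Complex.sq_norm, Complex.normSq_apply]
  simp only [Complex.sub_re, Complex.sub_im, Complex.add_re, Complex.add_im, Complex.mul_re,
    Complex.mul_im, Complex.I_re, Complex.I_im, Complex.ofReal_re, Complex.ofReal_im,
    Complex.inv_re, Complex.inv_im, Complex.normSq_ofReal]
  field_simp
  linear_combination (yj^2*(b.re*b.re+b.im*b.im)*c^4 - (a.re*a.re+a.im*a.im)*c^2) * hcs

lemma norm_exp_phase (d : ℕ) (s : ℝ) (x : EuclideanSpace ℝ (Fin d)) :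
    ‖Complex.exp (-Complex.I * (‖x‖ : ℂ)^2 * (s:ℂ) / 2)‖ = 1 := by
  rw [Complex.norm_exp]
  have : (-Complex.I * (‖x‖ : ℂ)^2 * (s:ℂ) / 2).re = 0 := by
    have : -Complex.I * (‖x‖ : ℂ)^2 * (s:ℂ) / 2
        = ((‖x‖^2 * s / 2 : ℝ) : ℂ) * (-Complex.I) := by push_cast; ring
    rw [this]
    simp [Complex.mul_re]
    exact Or.inl (by simp [← Complex.ofReal_pow])
  rw [this, Real.exp_zero]

lemma key_pointwise (d : ℕ) (p μ : ℝ) (f : SchwartzMap (EuclideanSpace ℝ (Fin d)) ℂ)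
    (c s : ℝ) (hc : 0 < c) (hcs : c^2*(1+s^2) = 1) (x : EuclideanSpace ℝ (Fin d)) :
    (1 / 2) * ∑ i : Fin d, ‖pderiv d (fun x => ((c ^ (-(d:ℝ)/2) : ℝ) : ℂ) * f (c⁻¹ • x) *
          Complex.exp (-Complex.I * (‖x‖ : ℂ)^2 * (s:ℂ) / 2)) i x‖ ^ 2
      + (1 / 2) * ‖x‖ ^ 2 * ‖((c ^ (-(d:ℝ)/2) : ℝ) : ℂ) * f (c⁻¹ • x) *
          Complex.exp (-Complex.I * (‖x‖ : ℂ)^2 * (s:ℂ) / 2)‖ ^ 2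
      + (μ / (p + 1)) * c ^ ((d / 2 : ℝ) * (p - 1) - 2) *
          ‖((c ^ (-(d:ℝ)/2) : ℝ) : ℂ) * f (c⁻¹ • x) *
            Complex.exp (-Complex.I * (‖x‖ : ℂ)^2 * (s:ℂ) / 2)‖ ^ (p + 1)
    = ((c:ℝ)^d)⁻¹ *
        (((1 / 2) * ∑ i : Fin d, ‖pderiv d (⇑f) i (c⁻¹ • x)‖ ^ 2
            + (μ / (p + 1)) * ‖f (c⁻¹ • x)‖ ^ (p + 1))
          + ((1 / 2) * ∑ j : Fin d, ‖((c⁻¹ • x : EuclideanSpace ℝ (Fin d)) j : ℂ) * f (c⁻¹ • x)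
                + Complex.I * (s : ℂ) * pderiv d (⇑f) j (c⁻¹ • x)‖ ^ 2
              + (μ * s ^ 2 / (p + 1)) * ‖f (c⁻¹ • x)‖ ^ (p + 1))) := by
  set y : EuclideanSpace ℝ (Fin d) := c⁻¹ • x with hy
  set A : ℝ := c ^ (-(d:ℝ)/2) with hA
  have hA0 : 0 < A := Real.rpow_pos_of_pos hc _
  have hxy : x = c • y := by rw [hy, smul_inv_smul₀ hc.ne']
  have hxi : ∀ i, x i = c * y i := by
    intro i; rw [hxy]; simp
  have hnx : ‖x‖ = c * ‖y‖ := by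
    rw [hxy, norm_smul, Real.norm_eq_abs, abs_of_pos hc]
  have hexp := norm_exp_phase d s x
  set b : ℝ := ‖f y‖ with hb
  have hlnorm : ‖((A : ℝ) : ℂ) * f y * Complex.exp (-Complex.I * (‖x‖ : ℂ)^2 * (s:ℂ) / 2)‖
      = A * b := by
    rw [norm_mul, norm_mul, hexp, mul_one, Complex.norm_real, Real.norm_eq_abs, abs_of_pos hA0]
  have hpd : ∀ i, ‖pderiv d (fun x => ((c ^ (-(d:ℝ)/2) : ℝ) : ℂ) * f (c⁻¹ • x) *
          Complex.exp (-Complex.I * (‖x‖ : ℂ)^2 * (s:ℂ) / 2)) i x‖ ^ 2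
      = A^2 * ‖(c⁻¹:ℂ) * pderiv d (⇑f) i y - Complex.I*s*(c*(y i))*(f y)‖^2 := by
    intro i
    rw [pderiv_lens_eq d f c s i x]
    rw [norm_mul, norm_mul, hexp, mul_one, Complex.norm_real, Real.norm_eq_abs, abs_of_pos hA0]
    rw [mul_pow]
    congr 2
    rw [hxi i]
    push_cast
    ring
  have hA2 : A^2 = ((c:ℝ)^d)⁻¹ := by
    rw [hA, ← Real.rpow_natCast (c ^ (-(d:ℝ)/2)) 2, ← Real.rpow_mul hc.le]
    rw [show (-(d:ℝ)/2 * ((2:ℕ):ℝ)) = -(d:ℝ) by push_cast; ring]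
    rw [Real.rpow_neg hc.le, Real.rpow_natCast]
  have hc2 : c ^ ((-(d:ℝ)) - 2) = ((c:ℝ)^d)⁻¹ * (1+s^2) := by
    rw [Real.rpow_sub hc, Real.rpow_neg hc.le, Real.rpow_natCast, Real.rpow_two]
    field_simp
    linear_combination (-1:ℝ) * hcs
  have hApw : (μ / (p + 1)) * c ^ ((d / 2 : ℝ) * (p - 1) - 2) * (A*b) ^ (p+1)
      = ((c:ℝ)^d)⁻¹ * ((1+s^2) * ((μ/(p+1)) * b^(p+1))) := by
    rw [Real.mul_rpow hA0.le (norm_nonneg _), hA, ← Real.rpow_natCast c d] at *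
    rw [hA]
    rw [← Real.rpow_mul hc.le (-(d:ℝ)/2) (p+1)]
    rw [show (μ / (p + 1)) * c ^ ((d / 2 : ℝ) * (p - 1) - 2) * (c ^ (-(d:ℝ)/2*(p+1)) * b^(p+1))
        = c ^ ((d / 2 : ℝ) * (p - 1) - 2) * c ^ (-(d:ℝ)/2*(p+1)) * ((μ/(p+1)) * b^(p+1)) by ring]
    rw [← Real.rpow_add hc]
    rw [show ((d / 2 : ℝ) * (p - 1) - 2 + -(d:ℝ)/2*(p+1)) = (-(d:ℝ)) - 2 by ring]
    rw [hc2]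
    ring
  have hny : ‖y‖^2 = ∑ j, (y j)^2 := by
    rw [EuclideanSpace.norm_eq, Real.sq_sqrt (by positivity)]
    simp [sq_abs]
  have hsum : (∑ i : Fin d, ‖(c⁻¹:ℂ) * pderiv d (⇑f) i y - Complex.I*s*(c*(y i))*(f y)‖^2)
      + c^2 * (∑ j : Fin d, (y j)^2) * b^2
      = (∑ i : Fin d, ‖pderiv d (⇑f) i y‖^2)
        + ∑ j : Fin d, ‖(y j : ℂ) * f y + Complex.I*(s:ℂ)*pderiv d (⇑f) j y‖^2 := by
    rw [Finset.mul_sum, Finset.sum_mul, ← Finset.sum_add_distrib, ← Finset.sum_add_distrib]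
    exact Finset.sum_congr rfl fun i _ => per_coord c s (y i) hcs (pderiv d (⇑f) i y) (f y)
  simp only [← hA] at hpd
  simp only [hpd, hlnorm]
  rw [hApw]
  rw [mul_pow A b, ← Finset.mul_sum, hA2, hnx, mul_pow c ‖y‖, hny]
  linear_combination (((c:ℝ)^d)⁻¹/2) * hsum

/-- The harmonic energy of `Lu(t)` equals the classical energy of
`u(tan t)` plus the pseudoconformal energy of `u(tan t)`. -/
theorem harmonic_energy_identity (d : ℕ) (hd : 1 ≤ d) (p : ℝ) (hp : 1 < p) (μ : ℝ)
    (hμ : μ = 1 ∨ μ = -1)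
    (u : ℝ → EuclideanSpace ℝ (Fin d) → ℂ)
    (hsmooth : ContDiff ℝ (⊤ : ℕ∞) (fun q : ℝ × EuclideanSpace ℝ (Fin d) => u q.1 q.2))
    (hdecay : ∀ t : ℝ, ∃ f : SchwartzMap (EuclideanSpace ℝ (Fin d)) ℂ, u t = f)
    (t : ℝ) (ht : t ∈ Set.Ioo (-(π / 2)) (π / 2)) :
    (∫ x : EuclideanSpace ℝ (Fin d),
        ((1 / 2) * ∑ i : Fin d, ‖pderiv d (lens d u t) i x‖ ^ 2
          + (1 / 2) * ‖x‖ ^ 2 * ‖lens d u t x‖ ^ 2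
          + (μ / (p + 1)) * (Real.cos t) ^ ((d / 2 : ℝ) * (p - 1) - 2)
              * ‖lens d u t x‖ ^ (p + 1)))
      = (∫ x : EuclideanSpace ℝ (Fin d),
          ((1 / 2) * ∑ i : Fin d, ‖pderiv d (u (Real.tan t)) i x‖ ^ 2
            + (μ / (p + 1)) * ‖u (Real.tan t) x‖ ^ (p + 1)))
        + (∫ x : EuclideanSpace ℝ (Fin d),
            ((1 / 2) * ∑ j : Fin d,
                ‖(x j : ℂ) * u (Real.tan t) x
                  + Complex.I * (Real.tan t : ℂ) * pderiv d (u (Real.tan t)) j x‖ ^ 2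
              + (μ * (Real.tan t) ^ 2 / (p + 1)) * ‖u (Real.tan t) x‖ ^ (p + 1))) := by
  obtain ⟨f, hf⟩ := hdecay (Real.tan t)
  have hc : 0 < Real.cos t := Real.cos_pos_of_mem_Ioo ht
  set c : ℝ := Real.cos t with hcdef
  set s : ℝ := Real.tan t with hsdef
  have hcs : c ^ 2 * (1 + s ^ 2) = 1 := by
    rw [hsdef, hcdef, Real.tan_eq_sin_div_cos]
    have h2 := Real.sin_sq_add_cos_sq t
    have hc' : Real.cos t ≠ 0 := hc.ne'
    field_simp
    linear_combination h2
  rw [hf]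
  have hlens : lens d u t = fun x => ((c ^ (-(d:ℝ)/2) : ℝ) : ℂ) * f (c⁻¹ • x) *
      Complex.exp (-Complex.I * (‖x‖ : ℂ)^2 * (s:ℂ) / 2) := by
    funext x
    simp only [lens, hf, ← hcdef, ← hsdef]
  -- integrability
  have hpint : ∀ i : Fin d, Integrable
      (fun y : EuclideanSpace ℝ (Fin d) => ‖pderiv d (⇑f) i y‖ ^ 2) := by
    intro i
    have h := schwartz_integrable_normsq d (LineDeriv.lineDerivOp (EuclideanSpace.single i (1:ℝ)) f)
    simpa only [SchwartzMap.lineDerivOp_apply_eq_fderiv, pderiv] using h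
  have hrint : Integrable (fun y : EuclideanSpace ℝ (Fin d) => ‖f y‖ ^ (p + 1)) :=
    schwartz_integrable_rpow d f (by linarith)
  have hG1int : Integrable (fun y : EuclideanSpace ℝ (Fin d) =>
      (1 / 2) * ∑ i : Fin d, ‖pderiv d (⇑f) i y‖ ^ 2
        + (μ / (p + 1)) * ‖f y‖ ^ (p + 1)) :=
    ((integrable_finset_sum Finset.univ (fun i _ => hpint i)).const_mul (1/2)).add
      (hrint.const_mul (μ / (p + 1)))
  have hqint : ∀ j : Fin d, Integrable (fun y : EuclideanSpace ℝ (Fin d) =>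
      ‖(y j : ℂ) * f y + Complex.I * (s : ℂ) * pderiv d (⇑f) j y‖ ^ 2) := by
    intro j
    have h := schwartz_integrable_normsq d (coordMulS d j f +
      (Complex.I * (s:ℂ)) • LineDeriv.lineDerivOp (EuclideanSpace.single j (1:ℝ)) f)
    have he : ∀ y : EuclideanSpace ℝ (Fin d),
        ((coordMulS d j f +
          (Complex.I * (s:ℂ)) • LineDeriv.lineDerivOp (EuclideanSpace.single j (1:ℝ)) f) y)
        = (y j : ℂ) * f y + Complex.I * (s : ℂ) * pderiv d (⇑f) j y := by
      intro y
      simp only [SchwartzMap.add_apply, SchwartzMap.smul_apply, coordMulS_apply,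
        SchwartzMap.lineDerivOp_apply_eq_fderiv, smul_eq_mul, pderiv]
      ring
    simpa only [he] using h
  have hG2int : Integrable (fun y : EuclideanSpace ℝ (Fin d) =>
      (1 / 2) * ∑ j : Fin d, ‖(y j : ℂ) * f y
        + Complex.I * (s : ℂ) * pderiv d (⇑f) j y‖ ^ 2
        + (μ * s ^ 2 / (p + 1)) * ‖f y‖ ^ (p + 1)) :=
    ((integrable_finset_sum Finset.univ (fun j _ => hqint j)).const_mul (1/2)).add
      (hrint.const_mul (μ * s ^ 2 / (p + 1)))
  -- pointwise identity
  have keyfun : (fun x : EuclideanSpace ℝ (Fin d) =>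
        ((1 / 2) * ∑ i : Fin d, ‖pderiv d (lens d u t) i x‖ ^ 2
          + (1 / 2) * ‖x‖ ^ 2 * ‖lens d u t x‖ ^ 2
          + (μ / (p + 1)) * c ^ ((d / 2 : ℝ) * (p - 1) - 2)
              * ‖lens d u t x‖ ^ (p + 1)))
      = fun x : EuclideanSpace ℝ (Fin d) => ((c:ℝ)^d)⁻¹ *
          ((fun y : EuclideanSpace ℝ (Fin d) =>
            ((1 / 2) * ∑ i : Fin d, ‖pderiv d (⇑f) i y‖ ^ 2
              + (μ / (p + 1)) * ‖f y‖ ^ (p + 1))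
            + ((1 / 2) * ∑ j : Fin d, ‖(y j : ℂ) * f y
                + Complex.I * (s : ℂ) * pderiv d (⇑f) j y‖ ^ 2
              + (μ * s ^ 2 / (p + 1)) * ‖f y‖ ^ (p + 1))) (c⁻¹ • x)) := by
    funext x
    rw [hlens]
    exact key_pointwise d p μ f c s hc hcs x
  rw [keyfun]
  rw [MeasureTheory.integral_const_mul]
  rw [MeasureTheory.Measure.integral_comp_smul volume
    (fun y : EuclideanSpace ℝ (Fin d) =>
      ((1 / 2) * ∑ i : Fin d, ‖pderiv d (⇑f) i y‖ ^ 2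
        + (μ / (p + 1)) * ‖f y‖ ^ (p + 1))
      + ((1 / 2) * ∑ j : Fin d, ‖(y j : ℂ) * f y
          + Complex.I * (s : ℂ) * pderiv d (⇑f) j y‖ ^ 2
        + (μ * s ^ 2 / (p + 1)) * ‖f y‖ ^ (p + 1))) c⁻¹]
  rw [finrank_euclideanSpace_fin, inv_pow, inv_inv, abs_of_pos (pow_pos hc d),
    smul_eq_mul, ← mul_assoc, inv_mul_cancel₀ (pow_pos hc d).ne', one_mul]
  exact integral_add hG1int hG2int
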